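/- arXiv:2008.10058 — 3 statements merged into one kernel-verified Lean document; each statement's English description precedes it below -/
import Mathlib

section
/- Let J, E ⊂ ℝ be multi-intervals with disjoint interiors and let A: L²(J) → L²(E) be given by (Af)(x) = (1/π)∫_J f(y)/(x-y) dy. If f ∈ L²(J) satisfies Af = 0 almost everywhere on E, then f = 0. Consequently 0 is not an eigenvalue of the block operator 𝒦 = [[0, A],[A†, 0]] on L²(E)⊕L²(J). -/
/-!
The Cauchy transform `F z = ∫_J g y / (z - y) dy` is holomorphic on `ℂ \ J`, which is connected,
and it vanishes almost everywhere on a real interval of `E` disjoint from `J` (the interiors are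
disjoint and `J` differs from its interior by finitely many endpoints). By the identity theorem
`F` vanishes on all of `ℂ \ J`, so all its derivatives vanish at a real point `c ∉ J`:
`∫_J g y / (c - y) ^ (n + 1) dy = 0` for every `n`. Thus `g y / (c - y)` is orthogonal to all
polynomials in the injective function `y ↦ (c - y)⁻¹`, which are dense in `C(J, ℝ)` by
Stone–Weierstrass, hence `g = 0` a.e. on `J`. Since `A† f` is minus the Cauchy transform of `f`
on `E`, the second claim is the first one with `J` and `E` exchanged.
-/

open MeasureTheory

/-- A multi-interval: a finite union of closed bounded intervals. -/
def IsMultiInterval (S : Set ℝ) : Prop :=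
  ∃ (n : ℕ) (a b : Fin n → ℝ), (∀ i, a i ≤ b i) ∧ S = ⋃ i, Set.Icc (a i) (b i)

open Set Filter Topology Complex Polynomial

namespace IsMultiInterval

variable {S : Set ℝ}

theorem isCompact (h : IsMultiInterval S) : IsCompact S := by
  obtain ⟨n, a, b, -, rfl⟩ := h
  exact isCompact_iUnion fun i => isCompact_Icc

theorem finite_diff_interior (h : IsMultiInterval S) : (S \ interior S).Finite := by
  obtain ⟨n, a, b, hab, rfl⟩ := h
  refine (finite_iUnion fun i => (finite_singleton (b i)).insert (a i)).subset ?_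
  rintro x ⟨hx, hxint⟩
  obtain ⟨i, hi⟩ := mem_iUnion.1 hx
  refine mem_iUnion.2 ⟨i, (Icc_sdiff_Ioo_same (hab i)).subset ⟨hi, fun hIoo => hxint ?_⟩⟩
  exact interior_mono (subset_iUnion (fun i => Icc (a i) (b i)) i) (by rwa [interior_Icc])

theorem exists_notMem_mem_nhds {E : Set ℝ} (h : IsMultiInterval S)
    (hdisj : interior S ∩ interior E = ∅) (hE : (interior E).Nonempty) :
    ∃ x₀ ∉ S, E ∈ 𝓝 x₀ := by
  obtain ⟨x, hx⟩ := hE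
  obtain ⟨x₀, ⟨hx₀E, hx₀S⟩⟩ :=
    ((infinite_of_mem_nhds x (isOpen_interior.mem_nhds hx)).sdiff h.finite_diff_interior).nonempty
  refine ⟨x₀, fun hx₀ => ?_, mem_interior_iff_mem_nhds.1 hx₀E⟩
  exact hdisj.subset ⟨by_contra fun h' => hx₀S ⟨hx₀, h'⟩, hx₀E⟩

end IsMultiInterval

namespace Complex

variable {K : Set ℝ}

theorem isPreconnected_compl_image_ofReal (hK : Kᶜ.Nonempty) : IsPreconnected (ofReal '' K)ᶜ := by
  let W : ℝ → Set ℂ := fun x => {z | 0 < z.im} ∪ {z | z.re = x} ∪ {z | z.im < 0}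
  have hW : ∀ x, IsPreconnected (W x) := fun x =>
    (((convex_halfSpace_im_gt 0).isPreconnected.union (⟨x, 1⟩ : ℂ) (by simp) (by simp)
      (convex_hyperplane (.mk add_re smul_re) x).isPreconnected)).union (⟨x, -1⟩ : ℂ)
      (by simp) (by simp) (convex_halfSpace_im_lt 0).isPreconnected
  have hWK : ∀ x ∉ K, W x ⊆ (ofReal '' K)ᶜ := by
    rintro x hx z hz ⟨s, hs, rfl⟩
    rcases hz with (hz | hz) | hz <;> simp_all
  obtain ⟨x₀, hx₀⟩ := hK
  refine isPreconnected_of_forall I fun z hz => ?_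
  by_cases hzim : z.im = 0
  · have hzK : z.re ∉ K := fun h => hz ⟨z.re, h, Complex.ext (by simp) (by simp [hzim])⟩
    exact ⟨W z.re, hWK _ hzK, by simp [W], by simp [W], hW _⟩
  · exact ⟨W x₀, hWK _ hx₀, by simp [W], by rcases lt_or_gt_of_ne hzim with h | h <;> simp [W, h],
      hW _⟩

theorem isOpen_compl_image_ofReal (hK : IsClosed K) : IsOpen (ofReal '' K)ᶜ :=
  (isUniformEmbedding_ofReal.isClosedEmbedding.isClosedMap K hK).isOpen_compl

theorem exists_pos_le_norm_sub_ofReal (hK : IsClosed K) {z : ℂ} (hz : z ∉ ofReal '' K) :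
    ∃ r > 0, ∀ w ∈ Metric.ball z r, ∀ y ∈ K, r ≤ ‖w - y‖ := by
  obtain ⟨ε, hε, hball⟩ := Metric.isOpen_iff.1 (isOpen_compl_image_ofReal hK) z hz
  refine ⟨ε / 2, half_pos hε, fun w hw y hy => not_lt.1 fun hlt => hball ?_ ⟨y, hy, rfl⟩⟩
  rw [Metric.mem_ball] at hw ⊢
  calc dist (y : ℂ) z ≤ dist (y : ℂ) w + dist w z := dist_triangle _ _ _
    _ < ε / 2 + ε / 2 := by rw [dist_comm, dist_eq_norm]; gcongr
    _ = ε := add_halves ε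

end Complex

theorem MeasureTheory.Measure.frequently_nhdsNE_of_ae {X : Type*} [TopologicalSpace X]
    [T1Space X] [MeasurableSpace X] (μ : Measure X) [μ.IsOpenPosMeasure] {x₀ : X}
    [(𝓝[≠] x₀).NeBot] {U : Set X} (hU : U ∈ 𝓝 x₀) {p : X → Prop}
    (h : ∀ᵐ x ∂μ, x ∈ U → p x) : ∃ᶠ x in 𝓝[≠] x₀, p x := by
  intro hnot
  obtain ⟨V, hV, hx₀V, hVsub⟩ :=
    mem_nhdsWithin.1 (Filter.Eventually.and (mem_nhdsWithin_of_mem_nhds hU) hnot)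
  have hpos : 0 < μ (V ∩ {x₀}ᶜ) := (hV.inter isOpen_compl_singleton).measure_pos μ
    (Filter.nonempty_of_mem (inter_mem (mem_nhdsWithin_of_mem_nhds (hV.mem_nhds hx₀V))
      self_mem_nhdsWithin))
  refine hpos.ne' (measure_mono_null (fun x hx => ?_) (ae_iff.1 h))
  exact fun himp => (hVsub hx).2 (himp (hVsub hx).1)

theorem MeasureTheory.MemLp.integrableOn_of_indicator {α F : Type*} [MeasurableSpace α]
    {μ : Measure α} [NormedAddCommGroup F] {s : Set α} {f : α → F} {p : ENNReal} (hp : 1 ≤ p)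
    (hs : MeasurableSet s) (hμs : μ s ≠ ⊤) (h : MemLp (s.indicator f) p μ) :
    IntegrableOn f s μ :=
  have := isFiniteMeasure_restrict.2 hμs
  ((memLp_indicator_iff_restrict hs).1 h).integrable hp

/-- `cauchyKernelIntegral μ K g 0` is the Cauchy transform of `g` on `K`, and
`(-1) ^ n * n ! * cauchyKernelIntegral μ K g n` is its `n`-th derivative. -/
noncomputable def cauchyKernelIntegral (μ : Measure ℝ) (K : Set ℝ) (g : ℝ → ℂ) (n : ℕ)
    (z : ℂ) : ℂ :=
  ∫ y in K, g y / (z - y) ^ (n + 1) ∂μ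

section CauchyKernel

variable {μ : Measure ℝ} {K : Set ℝ} {g : ℝ → ℂ}

theorem integrableOn_div_sub_ofReal_pow (hK : MeasurableSet K) (hg : IntegrableOn g K μ)
    {z : ℂ} {r : ℝ} (hr : 0 < r) (hz : ∀ y ∈ K, r ≤ ‖z - y‖) (n : ℕ) :
    IntegrableOn (fun y => g y / (z - y) ^ (n + 1)) K μ := by
  refine hg.norm.mul_const ((r ^ (n + 1))⁻¹) |>.mono' ?_ ?_
  · exact (hg.aemeasurable.div
      (by fun_prop : Measurable fun y : ℝ => (z - y) ^ (n + 1)).aemeasurable).aestronglyMeasurable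
  · filter_upwards [ae_restrict_mem hK] with y hy
    rw [norm_div, norm_pow, div_eq_mul_inv]
    gcongr
    exact hz y hy

theorem hasDerivAt_cauchyKernelIntegral (hK : IsClosed K) (hg : IntegrableOn g K μ) {z : ℂ}
    (hz : z ∉ ofReal '' K) (n : ℕ) :
    HasDerivAt (cauchyKernelIntegral μ K g n)
      (-(n + 1) * cauchyKernelIntegral μ K g (n + 1) z) z := by
  obtain ⟨r, hr, hrK⟩ := exists_pos_le_norm_sub_ofReal hK hz
  have hzK := hrK z (Metric.mem_ball_self hr)
  have key := hasDerivAt_integral_of_dominated_loc_of_deriv_le (μ := μ.restrict K)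
    (F := fun w y => g y / (w - y) ^ (n + 1))
    (F' := fun w y => -(n + 1) * (g y / (w - y) ^ (n + 2)))
    (bound := fun y => (n + 1) * ‖g y‖ / r ^ (n + 2)) (Metric.ball_mem_nhds z hr)
    (eventually_of_mem (Metric.ball_mem_nhds z hr) fun w hw =>
      (integrableOn_div_sub_ofReal_pow hK.measurableSet hg hr (hrK w hw) n).aestronglyMeasurable)
    (integrableOn_div_sub_ofReal_pow hK.measurableSet hg hr hzK n)
    ((integrableOn_div_sub_ofReal_pow hK.measurableSet hg hr hzK (n + 1)).const_mul
      _).aestronglyMeasurable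
    ?_ ((hg.norm.const_mul _).div_const _) ?_
  · rw [show -(n + 1 : ℂ) * cauchyKernelIntegral μ K g (n + 1) z =
        ∫ y in K, -(n + 1) * (g y / (z - y) ^ (n + 2)) ∂μ by rw [integral_const_mul]; rfl]
    exact key.2
  · filter_upwards [ae_restrict_mem hK.measurableSet] with y hy w hw
    rw [norm_mul, norm_div, norm_pow, norm_neg, mul_div_assoc]
    gcongr
    · norm_cast
    · exact hrK w hw y hy
  · filter_upwards [ae_restrict_mem hK.measurableSet] with y hy w hw
    have hwy : w - y ≠ 0 := norm_pos_iff.1 (hr.trans_le (hrK w hw y hy))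
    refine ((hasDerivAt_const w (g y)).div (((hasDerivAt_id w).sub_const (y : ℂ)).pow (n + 1))
      (pow_ne_zero _ hwy)).congr_deriv ?_
    simp only [Pi.pow_apply, id, Nat.add_sub_cancel]
    field_simp
    push_cast
    ring

theorem differentiableOn_cauchyKernelIntegral (hK : IsClosed K) (hg : IntegrableOn g K μ)
    (n : ℕ) : DifferentiableOn ℂ (cauchyKernelIntegral μ K g n) (ofReal '' K)ᶜ := fun _ hz =>
  (hasDerivAt_cauchyKernelIntegral hK hg hz n).differentiableAt.differentiableWithinAt

theorem cauchyKernelIntegral_eqOn_zero_of_frequently (hK : IsClosed K) (hg : IntegrableOn g K μ)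
    {x₀ : ℝ} (hx₀ : x₀ ∉ K)
    (hfreq : ∃ᶠ x : ℝ in 𝓝[≠] x₀, cauchyKernelIntegral μ K g 0 x = 0) :
    EqOn (cauchyKernelIntegral μ K g 0) 0 (ofReal '' K)ᶜ := by
  have hmap : Tendsto ofReal (𝓝[≠] x₀) (𝓝[≠] (x₀ : ℂ)) :=
    continuous_ofReal.continuousWithinAt.tendsto_nhdsWithin fun _ hx => ofReal_injective.ne hx
  exact ((differentiableOn_cauchyKernelIntegral hK hg 0).analyticOnNhd
    (isOpen_compl_image_ofReal hK)).eqOn_zero_of_preconnected_of_frequently_eq_zero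
    (isPreconnected_compl_image_ofReal ⟨x₀, hx₀⟩) (ofReal_injective.mem_set_image.not.2 hx₀)
    (hmap.frequently hfreq)

theorem cauchyKernelIntegral_eqOn_zero_of_eqOn_zero (hK : IsClosed K) (hg : IntegrableOn g K μ)
    (h₀ : EqOn (cauchyKernelIntegral μ K g 0) 0 (ofReal '' K)ᶜ) (n : ℕ) :
    EqOn (cauchyKernelIntegral μ K g n) 0 (ofReal '' K)ᶜ := by
  induction n with
  | zero => exact h₀
  | succ n ih =>
    intro z hz
    have hderiv := (hasDerivAt_cauchyKernelIntegral hK hg hz n).unique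
      ((hasDerivAt_const z (0 : ℂ)).congr_of_eventuallyEq
        (eventuallyEq_of_mem ((isOpen_compl_image_ofReal hK).mem_nhds hz) ih))
    exact (mul_eq_zero.1 hderiv).resolve_left (neg_ne_zero.2 (Nat.cast_add_one_ne_zero n))

end CauchyKernel

theorem ContinuousMap.exists_aeval_near_of_injective {α : Type*} [TopologicalSpace α]
    [CompactSpace α] {u : C(α, ℝ)} (hu : Function.Injective u) (f : C(α, ℝ)) {ε : ℝ}
    (hε : 0 < ε) : ∃ p : ℝ[X], ‖aeval u p - f‖ < ε := by
  obtain ⟨q, hq⟩ := exists_mem_subalgebra_near_continuousMap_of_separatesPoints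
    (Algebra.adjoin ℝ {u}) (fun x y hxy => ⟨u, ⟨u, Algebra.subset_adjoin rfl, rfl⟩, hu.ne hxy⟩)
    f ε hε
  obtain ⟨p, hp⟩ := (Algebra.adjoin_singleton_eq_range_aeval ℝ u).le q.2
  exact ⟨p, hp ▸ hq⟩

section Moments

variable {μ : Measure ℝ} {K : Set ℝ}

theorem setIntegral_smul_eq_zero_of_forall_polynomial (hK : IsCompact K) {u : ℝ → ℝ}
    (hu : ContinuousOn u K) (hinj : InjOn u K) {h : ℝ → ℂ} (hh : IntegrableOn h K μ)
    (hpoly : ∀ p : ℝ[X], ∫ y in K, p.eval (u y) • h y ∂μ = 0)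
    {ψ : ℝ → ℝ} (hψ : ContinuousOn ψ K) : ∫ y in K, ψ y • h y ∂μ = 0 := by
  have := isCompact_iff_compactSpace.1 hK
  refine norm_le_zero_iff.1 (le_of_forall_pos_le_add fun ε hε => ?_)
  set C := ∫ y in K, ‖h y‖ ∂μ
  have hC : 0 ≤ C := integral_nonneg fun _ => norm_nonneg _
  let uK : C(K, ℝ) := ⟨K.domRestrict u, hu.domRestrict⟩
  let ψK : C(K, ℝ) := ⟨K.domRestrict ψ, hψ.domRestrict⟩
  obtain ⟨p, hp⟩ := ContinuousMap.exists_aeval_near_of_injective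
    (u := uK) (injOn_iff_injective.1 hinj) ψK (div_pos hε (by positivity : 0 < C + 1))
  have hpK : ∀ y ∈ K, ‖p.eval (u y) - ψ y‖ ≤ ε / (C + 1) := fun y hy => by
    have := ContinuousMap.norm_coe_le_norm (aeval uK p - ψK) ⟨y, hy⟩
    simp only [ContinuousMap.sub_apply, aeval_continuousMap_apply, Real.norm_eq_abs] at this
    exact this.trans hp.le
  have hpu : ContinuousOn (fun y => p.eval (u y)) K := p.continuous.comp_continuousOn hu
  calc ‖∫ y in K, ψ y • h y ∂μ‖ = ‖∫ y in K, (p.eval (u y) - ψ y) • h y ∂μ‖ := by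
        simp_rw [sub_smul]
        rw [integral_sub (hh.continuousOn_smul hpu hK) (hh.continuousOn_smul hψ hK), hpoly,
          zero_sub, norm_neg]
    _ ≤ ∫ y in K, ε / (C + 1) * ‖h y‖ ∂μ := by
        refine norm_integral_le_of_norm_le (hh.norm.const_mul _) ?_
        filter_upwards [ae_restrict_mem hK.measurableSet] with y hy
        rw [norm_smul]
        gcongr
        exact hpK y hy
    _ = ε / (C + 1) * C := integral_const_mul _ _
    _ ≤ 0 + ε := by
        rw [zero_add, div_mul_eq_mul_div, div_le_iff₀ (by positivity)]
        nlinarith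

theorem ae_eq_zero_of_forall_integral_div_sub_pow_eq_zero (hK : IsCompact K) {g : ℝ → ℂ}
    (hg : IntegrableOn g K μ) {c : ℝ} (hc : c ∉ K)
    (hmom : ∀ n : ℕ, ∫ y in K, g y / ((c : ℂ) - y) ^ (n + 1) ∂μ = 0) :
    ∀ᵐ y ∂μ, y ∈ K → g y = 0 := by
  set u : ℝ → ℝ := fun y => (c - y)⁻¹
  have hcK : ∀ y ∈ K, c - y ≠ 0 := fun y hy h => hc (sub_eq_zero.1 h ▸ hy)
  have hu : ContinuousOn u K := (continuousOn_const.sub continuousOn_id).inv₀ hcK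
  have hinj : InjOn u K := fun x _ y _ hxy => by simpa using inv_injective hxy
  have hh : IntegrableOn (fun y => u y • g y) K μ := hg.continuousOn_smul hu hK
  have hpow : ∀ n : ℕ, ∀ y, u y ^ n • u y • g y = g y / ((c : ℂ) - y) ^ (n + 1) := by
    intro n y
    simp only [u, Complex.real_smul]
    push_cast
    rw [div_eq_inv_mul, ← inv_pow, pow_succ]
    ring
  have hpoly : ∀ p : ℝ[X], ∫ y in K, p.eval (u y) • u y • g y ∂μ = 0 := by
    intro p
    induction p using Polynomial.induction_on' with
    | add p q hp hq =>
      simp_rw [eval_add, add_smul]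
      rw [integral_add (hh.continuousOn_smul (f := fun y => p.eval (u y))
        (p.continuous.comp_continuousOn hu) hK) (hh.continuousOn_smul
        (f := fun y => q.eval (u y)) (q.continuous.comp_continuousOn hu) hK), hp, hq, add_zero]
    | monomial n a =>
      simp_rw [eval_monomial, mul_smul, hpow, integral_smul, hmom, smul_zero]
  have hzero : ∀ᵐ y ∂μ.restrict K, u y • g y = 0 :=
    ae_eq_zero_of_integral_contDiff_smul_eq_zero hh.locallyIntegrable fun ψ hψ _ =>
      setIntegral_smul_eq_zero_of_forall_polynomial hK hu hinj hh hpoly hψ.continuous.continuousOn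
  filter_upwards [(ae_restrict_iff' hK.measurableSet).1 hzero] with y hy hyK
  exact (smul_eq_zero.1 (hy hyK)).resolve_left (inv_ne_zero (hcK y hyK))

theorem IsCompact.ae_eq_zero_of_cauchyTransform_ae_eq_zero {J U : Set ℝ} (hJ : IsCompact J)
    {g : ℝ → ℂ} (hg : IntegrableOn g J μ) {x₀ : ℝ} (hx₀ : x₀ ∉ J) (hU : U ∈ 𝓝 x₀)
    (hvan : ∀ᵐ x, x ∈ U → ∫ y in J, g y / ((x - y : ℝ) : ℂ) ∂μ = 0) :
    ∀ᵐ y ∂μ, y ∈ J → g y = 0 := by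
  have hfreq : ∃ᶠ x : ℝ in 𝓝[≠] x₀, cauchyKernelIntegral μ J g 0 x = 0 :=
    volume.frequently_nhdsNE_of_ae hU <| hvan.mono fun x hx hxU => by
      simpa [cauchyKernelIntegral] using hx hxU
  have hall := cauchyKernelIntegral_eqOn_zero_of_eqOn_zero hJ.isClosed hg
    (cauchyKernelIntegral_eqOn_zero_of_frequently hJ.isClosed hg hx₀ hfreq)
  exact ae_eq_zero_of_forall_integral_div_sub_pow_eq_zero hJ hg hx₀ fun n =>
    hall n (ofReal_injective.mem_set_image.not.2 hx₀)

end Moments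

theorem IsMultiInterval.ae_eq_zero_of_cauchyTransform_ae_eq_zero {J E : Set ℝ}
    (hJ : IsMultiInterval J) (hdisj : interior J ∩ interior E = ∅) (hE : (interior E).Nonempty)
    {g : ℝ → ℂ} (hg : MemLp (J.indicator g) 2 volume)
    (hvan : ∀ᵐ x, x ∈ E → ∫ y in J, g y / ((x - y : ℝ) : ℂ) = 0) :
    ∀ᵐ y, y ∈ J → g y = 0 := by
  obtain ⟨x₀, hx₀, hEx₀⟩ := hJ.exists_notMem_mem_nhds hdisj hE
  exact hJ.isCompact.ae_eq_zero_of_cauchyTransform_ae_eq_zero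
    (hg.integrableOn_of_indicator one_le_two hJ.isCompact.measurableSet
      hJ.isCompact.measure_lt_top.ne) hx₀ hEx₀ hvan

theorem stmt5_general (J E : Set ℝ) (hJ : IsMultiInterval J) (hE : IsMultiInterval E)
    (hdisj : interior J ∩ interior E = ∅)
    (hJint : (interior J).Nonempty) (hEint : (interior E).Nonempty)
    (g f : ℝ → ℂ) (hgL2 : MemLp (J.indicator g) 2 volume)
    (hfL2 : MemLp (E.indicator f) 2 volume)
    (hAg : ∀ᵐ x : ℝ, x ∈ E → (1 / (Real.pi : ℂ)) * ∫ y in J, g y / ((x - y : ℝ) : ℂ) = 0) :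
    (∀ᵐ y : ℝ, y ∈ J → g y = 0) ∧
    ((∀ᵐ w : ℝ, w ∈ J → (1 / (Real.pi : ℂ)) * ∫ x in E, f x / ((x - w : ℝ) : ℂ) = 0) →
      (∀ᵐ x : ℝ, x ∈ E → f x = 0)) := by
  have hπ : 1 / (Real.pi : ℂ) ≠ 0 := by simp [Real.pi_ne_zero]
  refine ⟨hJ.ae_eq_zero_of_cauchyTransform_ae_eq_zero hdisj hEint hgL2 ?_, fun hAf =>
    hE.ae_eq_zero_of_cauchyTransform_ae_eq_zero (inter_comm (interior J) (interior E) ▸ hdisj)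
      hJint hfL2 ?_⟩
  · filter_upwards [hAg] with x hx hxE using (mul_eq_zero.1 (hx hxE)).resolve_left hπ
  · filter_upwards [hAf] with w hw hwJ
    rw [← neg_eq_zero, ← integral_neg, ← (mul_eq_zero.1 (hw hwJ)).resolve_left hπ]
    congr 1 with x
    rw [← neg_sub x w, ofReal_neg, div_neg, neg_neg]

/-- Let `J, E` be multi-intervals with disjoint interiors (and nonempty
interiors).  If `g ∈ L²(J)` satisfies `(Ag)(x) = (1/π)∫_J g(y)/(x-y) dy = 0` a.e. on `E`,
then `g = 0` a.e. on `J`.  Consequently, `0` is not an eigenvalue of the block operator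
`𝒦 = [[0, A], [A†, 0]]` on `L²(E) ⊕ L²(J)`: if moreover `(A†f)(w) = (1/π)∫_E f(x)/(x-w) dx = 0`
a.e. on `J` for `f ∈ L²(E)`, then also `f = 0` a.e. on `E`. -/
theorem stmt5 (J E : Set ℝ) (hJ : IsMultiInterval J) (hE : IsMultiInterval E)
    (hdisj : interior J ∩ interior E = ∅)
    (hJint : (interior J).Nonempty) (hEint : (interior E).Nonempty)
    (g f : ℝ → ℂ) (hg : Measurable g) (hgL2 : MemLp (J.indicator g) 2 volume)
    (hf : Measurable f) (hfL2 : MemLp (E.indicator f) 2 volume)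
    (hAg : ∀ᵐ x : ℝ, x ∈ E → (1 / (Real.pi : ℂ)) * ∫ y in J, g y / ((x - y : ℝ) : ℂ) = 0) :
    (∀ᵐ y : ℝ, y ∈ J → g y = 0) ∧
    ((∀ᵐ w : ℝ, w ∈ J → (1 / (Real.pi : ℂ)) * ∫ x in E, f x / ((x - w : ℝ) : ℂ) = 0) →
      (∀ᵐ x : ℝ, x ∈ E → f x = 0)) :=
  stmt5_general J E hJ hE hdisj hJint hEint g f hgL2 hfL2 hAg
end

section
/- Let ρ ∈ ℂ with |Re ρ| < 1/2 and λ = −1/sin(πρ). Define P(z) = z^{ρσ₃}C₊(ρ) for Im z > 0 and P(z) = z^{ρσ₃}C₋(ρ) for Im z < 0, where σ₃ = diag(1,−1), z^{ρσ₃} = diag(z^ρ, z^{−ρ}) with the principal branch on ℂ ∖ (−∞,0], C₊(ρ) = [[1, −e^{−iπρ}],[1, e^{iπρ}]], and C₋(ρ) = [[1, −e^{iπρ}],[1, e^{−iπρ}]]. Then P satisfies the jump relations P₊(x) = P₋(x)·[[1, −2i/λ],[0,1]] for x > 0 and P₊(x) = P₋(x)·[[1,0],[2i/λ,1]] for x <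 0, where P₊ and P₋ denote boundary values from the upper and lower half-planes. -/
open Complex Matrix Filter Topology

/-- `C₊(ρ)`. -/
noncomputable def Cplus (ρ : ℂ) : Matrix (Fin 2) (Fin 2) ℂ :=
  !![(1 : ℂ), -Complex.exp (-(Real.pi * I * ρ)); 1, Complex.exp (Real.pi * I * ρ)]

/-- `C₋(ρ)`. -/
noncomputable def Cminus (ρ : ℂ) : Matrix (Fin 2) (Fin 2) ℂ :=
  !![(1 : ℂ), -Complex.exp (Real.pi * I * ρ); 1, Complex.exp (-(Real.pi * I * ρ))]

/-- The parametrix `P(z) = z^{ρσ₃} C₊(ρ)` for `Im z > 0` and `z^{ρσ₃} C₋(ρ)` for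
`Im z < 0`, where `z^{ρσ₃} = diag(z^ρ, z^{-ρ})` (principal branch). -/
noncomputable def Pmat (ρ : ℂ) (z : ℂ) : Matrix (Fin 2) (Fin 2) ℂ :=
  !![z ^ ρ, 0; 0, z ^ (-ρ)] * (if 0 < z.im then Cplus ρ else Cminus ρ)

/-!
On each half-plane `P` is `diag(z^ρ, z^{-ρ})` times a constant matrix, so its boundary values
are those of `z^{±ρ}`. On the positive axis the principal power is continuous, and the jump
reduces to the identity `C₊ = C₋ [[1, -c], [0, 1]]` with `c = e^{-iπρ} - e^{iπρ} = 2i/λ`. On the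
negative axis `z^w` tends to `|x|^w e^{±iπw}` from above and below; the common left factor
`diag(|x|^ρ, |x|^{-ρ})` splits off and the jump reduces to
`diag(e^{iπρ}, e^{-iπρ}) C₊ = diag(e^{-iπρ}, e^{iπρ}) C₋ [[1, 0], [c, 1]]`.
-/

theorem tendsto_cpow_nhdsWithin_of_pos {x : ℝ} (hx : 0 < x) (s : Set ℂ) (w : ℂ) :
    Tendsto (· ^ w) (𝓝[s] (x : ℂ)) (𝓝 ((x : ℂ) ^ w)) :=
  (continuousAt_cpow_const (ofReal_mem_slitPlane.2 hx)).tendsto.mono_left nhdsWithin_le_nhds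

theorem cpow_eventually_eq_exp_log_mul {x : ℝ} (hx : x ≠ 0) (s : Set ℂ) (w : ℂ) :
    (fun z : ℂ => exp (log z * w)) =ᶠ[𝓝[s] (x : ℂ)] (· ^ w) := by
  filter_upwards [nhdsWithin_le_nhds (eventually_ne_nhds (ofReal_ne_zero.2 hx))] with z hz
  exact (cpow_def_of_ne_zero hz w).symm

theorem exp_log_norm_add_mul {x : ℝ} (hx : x < 0) (θ w : ℂ) :
    exp ((Real.log ‖(x : ℂ)‖ + θ) * w) = ((-x : ℝ) : ℂ) ^ w * exp (θ * w) := by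
  rw [cpow_def_of_ne_zero (ofReal_ne_zero.2 (neg_ne_zero.2 hx.ne)), ← ofReal_log (by linarith),
    norm_real, Real.norm_eq_abs, abs_of_neg hx, ← exp_add, add_mul]

theorem tendsto_cpow_nhdsWithin_im_pos_of_neg {x : ℝ} (hx : x < 0) (w : ℂ) :
    Tendsto (· ^ w) (𝓝[{z | 0 < z.im}] (x : ℂ))
      (𝓝 (((-x : ℝ) : ℂ) ^ w * exp (Real.pi * I * w))) := by
  have hlog := (tendsto_log_nhdsWithin_im_nonneg_of_re_neg_of_im_zero (z := (x : ℂ))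
    (by simpa using hx) (by simp)).mono_left (nhdsWithin_mono _ fun z (hz : 0 < z.im) => hz.le)
  rw [← exp_log_norm_add_mul hx]
  exact ((continuous_exp.tendsto _).comp (hlog.mul_const w)).congr'
    (cpow_eventually_eq_exp_log_mul hx.ne _ w)

theorem tendsto_cpow_nhdsWithin_im_neg_of_neg {x : ℝ} (hx : x < 0) (w : ℂ) :
    Tendsto (· ^ w) (𝓝[{z | z.im < 0}] (x : ℂ))
      (𝓝 (((-x : ℝ) : ℂ) ^ w * exp (-(Real.pi * I * w)))) := by
  have hlog := tendsto_log_nhdsWithin_im_neg_of_re_neg_of_im_zero (z := (x : ℂ))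
    (by simpa using hx) (by simp)
  rw [← neg_mul, ← exp_log_norm_add_mul hx, ← sub_eq_add_neg]
  exact ((continuous_exp.tendsto _).comp (hlog.mul_const w)).congr'
    (cpow_eventually_eq_exp_log_mul hx.ne _ w)

theorem tendsto_ofReal_add_mul_I (x : ℝ) :
    Tendsto (fun ε : ℝ => (x : ℂ) + ε * I) (𝓝[>] 0) (𝓝[{z | 0 < z.im}] (x : ℂ)) := by
  refine tendsto_nhdsWithin_of_tendsto_nhds_of_eventually_within _ ?_ ?_
  · simpa using (((continuous_ofReal.tendsto 0).mul_const I).const_add (x : ℂ)).mono_left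
      nhdsWithin_le_nhds
  · filter_upwards [self_mem_nhdsWithin] with ε hε
    simpa using hε

theorem tendsto_ofReal_sub_mul_I (x : ℝ) :
    Tendsto (fun ε : ℝ => (x : ℂ) - ε * I) (𝓝[>] 0) (𝓝[{z | z.im < 0}] (x : ℂ)) := by
  refine tendsto_nhdsWithin_of_tendsto_nhds_of_eventually_within _ ?_ ?_
  · simpa using (((continuous_ofReal.tendsto 0).mul_const I).const_sub (x : ℂ)).mono_left
      nhdsWithin_le_nhds
  · filter_upwards [self_mem_nhdsWithin] with ε hε
    simpa using hε

theorem tendsto_fin_two_diag_mul {α : Type*} {l : Filter α} {f g : α → ℂ} {a b : ℂ}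
    (hf : Tendsto f l (𝓝 a)) (hg : Tendsto g l (𝓝 b)) (C : Matrix (Fin 2) (Fin 2) ℂ) :
    Tendsto (fun t => !![f t, 0; 0, g t] * C) l (𝓝 (!![a, 0; 0, b] * C)) := by
  refine tendsto_pi_nhds.2 fun i => tendsto_pi_nhds.2 fun j => ?_
  fin_cases i
  · simpa [Matrix.mul_apply] using hf.mul_const (C 0 j)
  · simpa [Matrix.mul_apply] using hg.mul_const (C 1 j)

theorem tendsto_Pmat_nhdsWithin_im_pos {ρ a b z₀ : ℂ}
    (ha : Tendsto (· ^ ρ) (𝓝[{z | 0 < z.im}] z₀) (𝓝 a))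
    (hb : Tendsto (· ^ (-ρ)) (𝓝[{z | 0 < z.im}] z₀) (𝓝 b)) :
    Tendsto (Pmat ρ) (𝓝[{z | 0 < z.im}] z₀) (𝓝 (!![a, 0; 0, b] * Cplus ρ)) :=
  (tendsto_fin_two_diag_mul ha hb _).congr' <| eventually_nhdsWithin_of_forall fun z hz => by
    simp [Pmat, show 0 < z.im from hz]

theorem tendsto_Pmat_nhdsWithin_im_neg {ρ a b z₀ : ℂ}
    (ha : Tendsto (· ^ ρ) (𝓝[{z | z.im < 0}] z₀) (𝓝 a))
    (hb : Tendsto (· ^ (-ρ)) (𝓝[{z | z.im < 0}] z₀) (𝓝 b)) :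
    Tendsto (Pmat ρ) (𝓝[{z | z.im < 0}] z₀) (𝓝 (!![a, 0; 0, b] * Cminus ρ)) :=
  (tendsto_fin_two_diag_mul ha hb _).congr' <| eventually_nhdsWithin_of_forall fun z hz => by
    simp [Pmat, (show z.im < 0 from hz).not_gt]

theorem two_mul_I_div_neg_one_div_sin (ρ : ℂ) :
    2 * I / -(1 / sin (Real.pi * ρ)) = exp (-(Real.pi * I * ρ)) - exp (Real.pi * I * ρ) := by
  rw [div_neg, one_div, div_inv_eq_mul, mul_right_comm, two_sin, neg_mul,
    mul_right_comm _ ρ I]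
  linear_combination -(exp (-(Real.pi * I * ρ)) - exp (Real.pi * I * ρ)) * I_sq

theorem Cplus_eq_Cminus_mul (ρ : ℂ) :
    Cplus ρ = Cminus ρ *
      !![1, -(exp (-(Real.pi * I * ρ)) - exp (Real.pi * I * ρ)); 0, 1] := by
  simp only [Cplus, Cminus, mul_fin_two, EmbeddingLike.apply_eq_iff_eq, vecCons_inj, and_true]
  refine ⟨⟨?_, ?_⟩, ?_, ?_⟩ <;> ring

theorem diag_mul_Cplus_eq_diag_mul_Cminus_mul (ρ a b : ℂ) :
    !![a * exp (Real.pi * I * ρ), 0; 0, b * exp (Real.pi * I * -ρ)] * Cplus ρ =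
      !![a * exp (-(Real.pi * I * ρ)), 0; 0, b * exp (-(Real.pi * I * -ρ))] * Cminus ρ *
        !![1, 0; exp (-(Real.pi * I * ρ)) - exp (Real.pi * I * ρ), 1] := by
  have he := exp_ne_zero (Real.pi * I * ρ)
  simp only [Cplus, Cminus, mul_fin_two, mul_neg, neg_neg, exp_neg,
    EmbeddingLike.apply_eq_iff_eq, vecCons_inj, and_true]
  refine ⟨⟨?_, ?_⟩, ?_, ?_⟩ <;> field_simp <;> ring

theorem stmt13_general (ρ lam : ℂ)
    (hlam : lam = -(1 / Complex.sin (Real.pi * ρ))) :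
    ∀ x : ℝ,
      (0 < x → ∃ Pp Pm : Matrix (Fin 2) (Fin 2) ℂ,
        Tendsto (fun ε : ℝ => Pmat ρ ((x : ℂ) + ε * I)) (𝓝[>] 0) (𝓝 Pp) ∧
        Tendsto (fun ε : ℝ => Pmat ρ ((x : ℂ) - ε * I)) (𝓝[>] 0) (𝓝 Pm) ∧
        Pp = Pm * !![(1 : ℂ), -(2 * I / lam); 0, 1]) ∧
      (x < 0 → ∃ Pp Pm : Matrix (Fin 2) (Fin 2) ℂ,
        Tendsto (fun ε : ℝ => Pmat ρ ((x : ℂ) + ε * I)) (𝓝[>] 0) (𝓝 Pp) ∧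
        Tendsto (fun ε : ℝ => Pmat ρ ((x : ℂ) - ε * I)) (𝓝[>] 0) (𝓝 Pm) ∧
        Pp = Pm * !![(1 : ℂ), 0; 2 * I / lam, 1]) := by
  intro x
  have hc : 2 * I / lam = exp (-(Real.pi * I * ρ)) - exp (Real.pi * I * ρ) := by
    rw [hlam, two_mul_I_div_neg_one_div_sin]
  refine ⟨fun hx => ⟨_, _,
    (tendsto_Pmat_nhdsWithin_im_pos (tendsto_cpow_nhdsWithin_of_pos hx _ ρ)
      (tendsto_cpow_nhdsWithin_of_pos hx _ (-ρ))).comp (tendsto_ofReal_add_mul_I x),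
    (tendsto_Pmat_nhdsWithin_im_neg (tendsto_cpow_nhdsWithin_of_pos hx _ ρ)
      (tendsto_cpow_nhdsWithin_of_pos hx _ (-ρ))).comp (tendsto_ofReal_sub_mul_I x), ?_⟩,
    fun hx => ⟨_, _,
    (tendsto_Pmat_nhdsWithin_im_pos (tendsto_cpow_nhdsWithin_im_pos_of_neg hx ρ)
      (tendsto_cpow_nhdsWithin_im_pos_of_neg hx (-ρ))).comp (tendsto_ofReal_add_mul_I x),
    (tendsto_Pmat_nhdsWithin_im_neg (tendsto_cpow_nhdsWithin_im_neg_of_neg hx ρ)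
      (tendsto_cpow_nhdsWithin_im_neg_of_neg hx (-ρ))).comp (tendsto_ofReal_sub_mul_I x), ?_⟩⟩
  · rw [hc, Matrix.mul_assoc, ← Cplus_eq_Cminus_mul]
  · rw [hc, diag_mul_Cplus_eq_diag_mul_Cminus_mul]

/-- For `|Re ρ| < 1/2` and `λ = -1/sin(πρ)`, the parametrix `P`
satisfies the jump relations `P₊(x) = P₋(x)·[[1, -2i/λ],[0,1]]` for `x > 0` and
`P₊(x) = P₋(x)·[[1, 0],[2i/λ, 1]]` for `x < 0`, where `P₊`, `P₋` are the boundary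
values from the upper and lower half planes. -/
theorem stmt13 (ρ lam : ℂ) (hρ : |ρ.re| < 1 / 2)
    (hsin : Complex.sin (Real.pi * ρ) ≠ 0)
    (hlam : lam = -(1 / Complex.sin (Real.pi * ρ))) :
    ∀ x : ℝ,
      (0 < x → ∃ Pp Pm : Matrix (Fin 2) (Fin 2) ℂ,
        Tendsto (fun ε : ℝ => Pmat ρ ((x : ℂ) + ε * I)) (𝓝[>] 0) (𝓝 Pp) ∧
        Tendsto (fun ε : ℝ => Pmat ρ ((x : ℂ) - ε * I)) (𝓝[>] 0) (𝓝 Pm) ∧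
        Pp = Pm * !![(1 : ℂ), -(2 * I / lam); 0, 1]) ∧
      (x < 0 → ∃ Pp Pm : Matrix (Fin 2) (Fin 2) ℂ,
        Tendsto (fun ε : ℝ => Pmat ρ ((x : ℂ) + ε * I)) (𝓝[>] 0) (𝓝 Pp) ∧
        Tendsto (fun ε : ℝ => Pmat ρ ((x : ℂ) - ε * I)) (𝓝[>] 0) (𝓝 Pm) ∧
        Pp = Pm * !![(1 : ℂ), 0; 2 * I / lam, 1]) :=
  stmt13_general ρ lam hlam
end

section
/- Let b₁ < b₂ < ... < b_{2n} be real numbers and define β_od(z) = ∏_{j=1}^n (z − b_{2j−1}), β_ev(z) = ∏_{j=1}^n (z − b_{2j}), and Q(x) = β_ev'(x)β_od(x) − β_ev(x)β_od'(x). Then Q(x) > 0 for all x ∈ ℝ, and Q is bounded away from zero on ℝ. -/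
/-!
Write `p = ∏ (X - a i)` and `q = ∏ (X - c i)`; the quantity in question is the Wronskian
`W(p, q) = p q' - p' q`. As `q - p` has degree `< n`, Lagrange interpolation at the nodes `a i`
gives `q = p + ∑ i, w i * q(a i) * p i`, where `p i = p / (X - a i)` and `w i` are the barycentric
weights. Since `W(p, p) = 0` and `W(p, p i) = -(p i)²`, this yields
`W(p, q) = ∑ i, -(w i * q(a i)) * (p i)²`. Interlacing makes every coefficient `-(w i * q(a i))`
positive, and the `p i` have no common zero, so `W(p, q) > 0` everywhere. Moreover `(p i)² ≥ 1`
off a compact set, so `W(p, q)` is bounded below there by a positive constant, and by continuity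
it is bounded away from zero on all of `ℝ`.
-/

open Polynomial Finset Filter Topology Lagrange

theorem Continuous.exists_gt_forall_le {α β : Type*} [LinearOrder α] [TopologicalSpace α]
    [OrderClosedTopology α] [TopologicalSpace β] [Nonempty β] {f : β → α} (hf : Continuous f)
    {a c : α} (hlt : ∀ x, a < f x) (hac : a < c) (hev : ∀ᶠ x in cocompact β, c ≤ f x) :
    ∃ δ, a < δ ∧ ∀ x, δ ≤ f x := by
  obtain ⟨x, hx⟩ := (hf.min (continuous_const (y := c))).exists_forall_le'
    (Classical.arbitrary β) (hev.mono fun y hy => by rw [min_eq_right hy]; exact min_le_right _ _)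
  exact ⟨min (f x) c, lt_min (hlt x) hac, fun y => (hx y).trans (min_le_left _ _)⟩

namespace Polynomial

theorem wronskian_X_sub_C_mul_self {R : Type*} [CommRing R] (r : R) (f : R[X]) :
    wronskian ((X - C r) * f) f = -f ^ 2 := by
  simp only [wronskian, derivative_mul, derivative_sub, derivative_X, derivative_C]
  ring

theorem wronskian_C_mul_right {R : Type*} [CommRing R] (r : R) (f g : R[X]) :
    wronskian f (C r * g) = C r * wronskian f g := by
  simp only [C_mul', LinearMap.map_smul (wronskianBilin R f), ← wronskianBilin_apply]

end Polynomial

namespace Lagrange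

theorem wronskian_nodal_nodal_erase {R ι : Type*} [CommRing R] [DecidableEq ι] {s : Finset ι}
    {v : ι → R} {i : ι} (hi : i ∈ s) :
    wronskian (nodal s v) (nodal (s.erase i) v) = -nodal (s.erase i) v ^ 2 := by
  rw [nodal_eq_mul_nodal_erase hi, wronskian_X_sub_C_mul_self]

section Field

variable {F ι : Type*} [Field F] [DecidableEq ι] {s : Finset ι} {v : ι → F}

theorem wronskian_nodal_interpolate (r : ι → F) :
    wronskian (nodal s v) (interpolate s v r) =
      -∑ i ∈ s, C (nodalWeight s v i * r i) * nodal (s.erase i) v ^ 2 := by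
  rw [interpolate_eq_nodalWeight_mul_nodal_div_X_sub_C, ← sum_neg_distrib, ← wronskianBilin_apply,
    map_sum]
  refine sum_congr rfl fun i hi => ?_
  rw [← nodal_erase_eq_nodal_div hi, mul_comm, ← mul_assoc, ← C_mul, mul_comm (r i),
    wronskianBilin_apply, wronskian_C_mul_right, wronskian_nodal_nodal_erase hi, mul_neg]

theorem eq_nodal_add_interpolate_of_monic (hvs : Set.InjOn v s) {q : F[X]} (hq : q.Monic)
    (hdeg : q.degree = #s) : q = nodal s v + interpolate s v fun i => q.eval (v i) := by
  have hlt : (q - nodal s v).degree < #s := by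
    simpa [hdeg] using degree_sub_lt_left (hdeg.trans degree_nodal.symm) hq.ne_zero
      (by rw [hq.leadingCoeff, nodal_monic.leadingCoeff])
  rw [← sub_eq_iff_eq_add', eq_interpolate hvs hlt]
  exact interpolate_eq_of_values_eq_on _ _ fun i hi => by
    rw [eval_sub, eval_nodal_at_node hi, sub_zero]

theorem wronskian_nodal_of_monic (hvs : Set.InjOn v s) {q : F[X]} (hq : q.Monic)
    (hdeg : q.degree = #s) :
    wronskian (nodal s v) q =
      -∑ i ∈ s, C (nodalWeight s v i * q.eval (v i)) * nodal (s.erase i) v ^ 2 := by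
  conv_lhs => rw [eq_nodal_add_interpolate_of_monic hvs hq hdeg]
  rw [wronskian_add_right, wronskian_self_eq_zero, zero_add, wronskian_nodal_interpolate]

end Field

theorem exists_eval_nodal_erase_ne_zero {R ι : Type*} [CommRing R] [IsDomain R] [DecidableEq ι]
    {s : Finset ι} {v : ι → R} (hvs : Set.InjOn v s) (hs : s.Nonempty)
    (x : R) : ∃ i ∈ s, (nodal (s.erase i) v).eval x ≠ 0 := by
  by_cases hx : ∃ i ∈ s, x = v i
  · obtain ⟨i, hi, rfl⟩ := hx
    refine ⟨i, hi, eval_nodal_not_at_node fun j hj hij => (mem_erase.1 hj).1 ?_⟩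
    exact (hvs hi (mem_of_mem_erase hj) hij).symm
  · push Not at hx
    obtain ⟨i, hi⟩ := hs
    exact ⟨i, hi, eval_nodal_not_at_node fun j hj => hx j (mem_of_mem_erase hj)⟩

theorem eventually_one_le_eval_nodal_sq {ι : Type*} (s : Finset ι) (v : ι → ℝ) :
    ∀ᶠ x in cocompact ℝ, 1 ≤ (nodal s v).eval x ^ 2 := by
  have hfactor : ∀ i ∈ s, ∀ᶠ x in cocompact ℝ, 1 ≤ (x - v i) ^ 2 := fun i _ =>
    (tendsto_norm_cocompact_atTop.eventually_ge_atTop (1 + |v i|)).mono fun x hx => by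
      rw [one_le_sq_iff_one_le_abs]
      have := abs_sub_abs_le_abs_sub x (v i)
      rw [Real.norm_eq_abs] at hx
      linarith
  filter_upwards [(eventually_all_finset s).2 hfactor] with x hx
  rw [eval_nodal, ← prod_pow]
  exact Finset.one_le_prod hx

theorem nodalWeight_mul_eval_nodal_neg {ι : Type*} [Fintype ι] [LinearOrder ι]
    {a c : ι → ℝ} (h1 : ∀ i, a i < c i) (h2 : ∀ i j, i < j → c i < a j) (j : ι) :
    nodalWeight univ a j * (nodal univ c).eval (a j) < 0 := by
  have hfactor : ∀ k ∈ univ.erase j, 0 < (a j - a k)⁻¹ * (a j - c k) := by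
    intro k hk
    rcases lt_or_gt_of_ne (ne_of_mem_erase hk) with hkj | hjk
    · have := h2 k j hkj
      exact mul_pos (inv_pos.2 (by linarith [h1 k])) (by linarith)
    · have := h2 j k hjk
      exact mul_pos_of_neg_of_neg (inv_lt_zero.2 (by linarith [h1 j])) (by linarith [h1 j, h1 k])
  rw [nodalWeight, eval_nodal, ← mul_prod_erase univ _ (mem_univ j), mul_left_comm,
    ← prod_mul_distrib]
  exact mul_neg_of_neg_of_pos (sub_neg.2 (h1 j)) (prod_pos hfactor)

theorem eval_wronskian_nodal {ι : Type*} [Fintype ι] (a c : ι → ℝ) (x : ℝ) :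
    (wronskian (nodal univ a) (nodal univ c)).eval x =
      deriv (fun t : ℝ => ∏ i, (t - c i)) x * (∏ i, (x - a i))
        - (∏ i, (x - c i)) * deriv (fun t : ℝ => ∏ i, (t - a i)) x := by
  have hderiv (b : ι → ℝ) : deriv (fun t : ℝ => ∏ i, (t - b i)) x =
      (derivative (nodal univ b)).eval x := by
    simp only [← eval_nodal, Polynomial.deriv]
  rw [hderiv, hderiv, wronskian, eval_sub, eval_mul, eval_mul, eval_nodal, eval_nodal]
  ring

end Lagrange

/-- Let `a i` (the odd-indexed points `b_{2i-1}`) and `c i` (the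
even-indexed points `b_{2i}`) be interlaced: `a 0 < c 0 < a 1 < c 1 < ⋯`.  With
`β_od(x) = ∏ (x - a i)`, `β_ev(x) = ∏ (x - c i)` and
`Q = β_ev'·β_od − β_ev·β_od'`, one has `Q(x) > 0` for all real `x`, and `Q` is
bounded away from zero on `ℝ`. -/
theorem stmt15 (n : ℕ) (hn : 0 < n) (a c : Fin n → ℝ)
    (h1 : ∀ i, a i < c i) (h2 : ∀ i j, i < j → c i < a j) :
    ∃ δ : ℝ, 0 < δ ∧ ∀ x : ℝ,
      δ ≤ deriv (fun t : ℝ => ∏ i, (t - c i)) x * (∏ i, (x - a i))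
            - (∏ i, (x - c i)) * deriv (fun t : ℝ => ∏ i, (t - a i)) x := by
  have ha : StrictMono a := fun i j hij => (h1 i).trans (h2 i j hij)
  set Q := wronskian (nodal univ a) (nodal univ c)
  set w : Fin n → ℝ := fun i => -(nodalWeight univ a i * (nodal univ c).eval (a i))
  have hw (i : Fin n) : 0 < w i := neg_pos.2 (nodalWeight_mul_eval_nodal_neg h1 h2 i)
  have hQ (x : ℝ) : Q.eval x = ∑ i, w i * (nodal (univ.erase i) a).eval x ^ 2 := by
    rw [show Q = _ from wronskian_nodal_of_monic ha.injective.injOn nodal_monic degree_nodal]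
    simp [eval_finsetSum, w]
  have hpos (x : ℝ) : 0 < Q.eval x := by
    obtain ⟨i, -, hi⟩ := exists_eval_nodal_erase_ne_zero ha.injective.injOn
      (univ_nonempty_iff.2 ⟨⟨0, hn⟩⟩) x
    rw [hQ]
    exact sum_pos' (fun j _ => (mul_nonneg (hw j).le (sq_nonneg _)))
      ⟨i, mem_univ i, mul_pos (hw i) (by positivity)⟩
  let i₀ : Fin n := ⟨0, hn⟩
  have hfar : ∀ᶠ x in cocompact ℝ, w i₀ ≤ Q.eval x :=
    (eventually_one_le_eval_nodal_sq (univ.erase i₀) a).mono fun x hx => by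
      rw [hQ]
      calc w i₀ ≤ w i₀ * (nodal (univ.erase i₀) a).eval x ^ 2 :=
            le_mul_of_one_le_right (hw i₀).le hx
        _ ≤ _ := single_le_sum (f := fun i => w i * (nodal (univ.erase i) a).eval x ^ 2)
            (fun i _ => mul_nonneg (hw i).le (sq_nonneg _)) (mem_univ i₀)
  obtain ⟨δ, hδ, hle⟩ := Q.continuous.exists_gt_forall_le hpos (hw i₀) hfar
  exact ⟨δ, hδ, fun x => eval_wronskian_nodal a c x ▸ hle x⟩
end
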